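/- arXiv:2105.13828 — 2 statements merged into one kernel-verified Lean document; each statement's English description precedes it below -/
import Mathlib

section
/- Let G be a finite graph, M a set of edges on V(G), and S ⊆ V(G) a set maximizing |S| among all sets minimizing |S| − odd(G \ M − S). Let B be the set of vertices outside S that are not isolated in (G \ M) − S. Then no connected component of (G \ M) induced on B is a tree; i.e., every component of B in G \ M contains a cycle. -/
/-!
Let `L` be `G \ M` with every edge at `S` deleted. Its odd components are the points of `S` and
the odd components of `(G \ M) - S`, and `B` is the set of non-isolated vertices of `L`. An edge
`xu` of `L` on no cycle is a bridge, and deleting the edges at `x` or at `u` then creates two more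
odd components: if the component of `x` is even, `{x}` becomes odd and by parity so does another
piece; if it is odd, the two sides of the bridge have sizes of different parity, and deleting the
edges at the endpoint `v` on the even side leaves `{v}` and the odd side as odd pieces, and by
parity a third. So `S ∪ {v}` has no larger deficiency than `S`, against the maximality of `|S|`.
Hence every edge of `L`, in particular one at any vertex of `B`, lies on a cycle.
-/

open SimpleGraph Set

/-- The number of odd components of `H` induced on the complement of `S`. -/
noncomputable def oddComps {V : Type*} [Fintype V] (H : SimpleGraph V) (S : Set V) : ℕ :=
  ({C : (H.induce Sᶜ).ConnectedComponent |
    Odd (({v : ↥Sᶜ | (H.induce Sᶜ).connectedComponentMk v = C}).ncard)}).ncard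

namespace SimpleGraph

variable {V : Type*} {G : SimpleGraph V}

lemma Walk.reachable_of_mem_support {u w x : V} (p : G.Walk u w) (hx : x ∈ p.support) :
    G.Reachable u x := by
  classical
  exact (p.takeUntil x hx).reachable

lemma IsIsolated.eq_of_reachable {v w : V} (hv : G.IsIsolated v) (h : G.Reachable v w) :
    v = w := by
  by_contra hne
  exact (G.mem_support_iff_not_isIsolated.mp (mem_support_of_reachable hne h)) hv

lemma IsIsolated.supp_connectedComponentMk {v : V} (hv : G.IsIsolated v) :
    (G.connectedComponentMk v).supp = {v} := by
  ext w
  rw [ConnectedComponent.mem_supp_iff, ConnectedComponent.eq, mem_singleton_iff]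
  exact ⟨fun h => ((hv.eq_of_reachable h.symm)).symm, fun h => h ▸ Reachable.rfl⟩

section Isolated

variable {s : Set V}

lemma notMem_of_reachable_of_isIsolated (hs : ∀ v ∈ s, G.IsIsolated v) {a w : V} (ha : a ∉ s)
    (h : G.Reachable a w) : w ∉ s :=
  fun hw => ha ((hs w hw).eq_of_reachable h.symm ▸ hw)

lemma reachable_induce_compl_iff (hs : ∀ v ∈ s, G.IsIsolated v) {a b : ↥sᶜ} :
    (G.induce sᶜ).Reachable a b ↔ G.Reachable a b := by
  refine ⟨fun h => h.map (Embedding.induce sᶜ).toHom, fun ⟨p⟩ =>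
    ⟨p.induce sᶜ fun x hx => ?_⟩⟩
  exact notMem_of_reachable_of_isIsolated hs a.2 (p.reachable_of_mem_support hx)

/-- Each isolated vertex is an odd component on its own. -/
lemma ncard_oddComponents_eq_of_isIsolated [Finite V] (hs : ∀ v ∈ s, G.IsIsolated v) :
    G.oddComponents.ncard = (G.induce sᶜ).oddComponents.ncard + s.ncard := by
  set Φ := ConnectedComponent.map (Embedding.induce sᶜ : G.induce sᶜ ↪g G).toHom
  have hsupp : ∀ C, (Φ C).supp = Subtype.val '' C.supp := by
    refine ConnectedComponent.ind fun a => ?_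
    ext w
    simp only [Φ, ConnectedComponent.map_mk, ConnectedComponent.mem_supp_iff,
      ConnectedComponent.eq, mem_image]
    refine ⟨fun h => ?_, ?_⟩
    · have hw : w ∈ sᶜ := notMem_of_reachable_of_isIsolated hs a.2 h.symm
      exact ⟨⟨w, hw⟩, (reachable_induce_compl_iff hs).mpr h, rfl⟩
    · rintro ⟨b, hb, rfl⟩
      exact (reachable_induce_compl_iff hs).mp hb
  have hΦ : Function.Injective Φ := fun C D h =>
    ConnectedComponent.supp_injective <| (image_injective.mpr Subtype.val_injective) <| by
      rw [← hsupp, ← hsupp, h]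
  have hcard : ∀ C, (Φ C).supp.ncard = C.supp.ncard := fun C => by
    rw [hsupp, ncard_image_of_injective _ Subtype.val_injective]
  have hmk : InjOn G.connectedComponentMk s := fun a ha b _ h =>
    (hs a ha).eq_of_reachable (ConnectedComponent.eq.mp h)
  have hsplit : G.oddComponents =
      G.connectedComponentMk '' s ∪ Φ '' (G.induce sᶜ).oddComponents := by
    ext C
    refine ⟨fun hC => ?_, ?_⟩
    · induction C using ConnectedComponent.ind with | _ a => ?_
      by_cases ha : a ∈ s
      · exact .inl ⟨a, ha, rfl⟩
      · refine .inr ⟨(G.induce sᶜ).connectedComponentMk ⟨a, ha⟩, ?_, rfl⟩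
        rw [mem_ofPred_eq, ← hcard]
        exact hC
    · rintro (⟨a, ha, rfl⟩ | ⟨C, hC, rfl⟩)
      · simp [oddComponents, (hs a ha).supp_connectedComponentMk]
      · rw [mem_ofPred_eq, hcard]
        exact hC
  have hdisj : Disjoint (G.connectedComponentMk '' s) (Φ '' (G.induce sᶜ).oddComponents) := by
    refine Set.disjoint_left.mpr ?_
    rintro _ ⟨a, ha, rfl⟩ ⟨C, -, hC⟩
    induction C using ConnectedComponent.ind with | _ b => ?_
    rw [show Φ _ = _ from ConnectedComponent.map_mk _ _, ConnectedComponent.eq] at hC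
    have hab : a = b := (hs a ha).eq_of_reachable hC.symm
    exact b.2 (hab ▸ ha)
  rw [hsplit, ncard_union_eq hdisj, ncard_image_of_injective _ hΦ, hmk.ncard_image,
    add_comm]

end Isolated

section DeleteIncidenceSet

variable {v x u : V}

lemma isIsolated_deleteIncidenceSet (G : SimpleGraph V) (v : V) :
    (G.deleteIncidenceSet v).IsIsolated v :=
  fun _ h => (deleteIncidenceSet_adj.mp h).2.1 rfl

lemma reachable_deleteIncidenceSet_iff {a w : V} (ha : ¬G.Reachable a v) :
    (G.deleteIncidenceSet v).Reachable a w ↔ G.Reachable a w := by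
  refine ⟨.mono (G.deleteIncidenceSet_le v), fun ⟨p⟩ =>
    ⟨p.toDeleteEdges _ fun e he hv => ?_⟩⟩
  exact ha (p.reachable_of_mem_support (p.mem_support_of_mem_edges he hv.2))

lemma supp_connectedComponentMk_deleteIncidenceSet {a : V} (ha : ¬G.Reachable a v) :
    ((G.deleteIncidenceSet v).connectedComponentMk a).supp = (G.connectedComponentMk a).supp := by
  ext w
  simp only [ConnectedComponent.mem_supp_iff, ConnectedComponent.eq, reachable_comm (u := w)]
  exact reachable_deleteIncidenceSet_iff ha

lemma supp_connectedComponentMk_subset_of_le {G' : SimpleGraph V} (h : G' ≤ G) (a : V) :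
    (G'.connectedComponentMk a).supp ⊆ (G.connectedComponentMk a).supp := fun _ hw =>
  ConnectedComponent.eq.mpr ((ConnectedComponent.eq.mp hw).mono h)

/-- The odd components of `G` other than that of `v` survive the deletion of the edges at `v`. -/
lemma ncard_oddComponents_deleteIncidenceSet [Finite V] (v : V) :
    (G.deleteIncidenceSet v).oddComponents.ncard =
      {d ∈ (G.deleteIncidenceSet v).oddComponents |
          d.supp ⊆ (G.connectedComponentMk v).supp}.ncard +
        (G.oddComponents \ {G.connectedComponentMk v}).ncard := by
  set c := G.connectedComponentMk v
  set Gv := G.deleteIncidenceSet v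
  have houtside : ∀ d ∈ Gv.oddComponents \ {d | d.supp ⊆ c.supp},
      ∃ a, ¬G.Reachable a v ∧ d = Gv.connectedComponentMk a := by
    rintro d ⟨-, hd⟩
    obtain ⟨a, had, hac⟩ := not_subset.mp hd
    refine ⟨a, fun h => hac (ConnectedComponent.eq.mpr h), ?_⟩
    exact ((ConnectedComponent.mem_supp_iff _ _).mp had).symm
  rw [← ncard_inter_add_ncard_sdiff_eq_ncard Gv.oddComponents {d | d.supp ⊆ c.supp}]
  congr 1
  refine ncard_congr (fun d _ => d.map (Hom.ofLE (G.deleteIncidenceSet_le v))) ?_ ?_ ?_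
  · intro d hd
    obtain ⟨a, ha, rfl⟩ := houtside d hd
    rw [ConnectedComponent.map_mk, Hom.ofLE_apply]
    refine ⟨?_, fun hac => hd.2 ?_⟩
    · rw [mem_ofPred_eq, ← supp_connectedComponentMk_deleteIncidenceSet ha]
      exact hd.1
    · rw [mem_ofPred_eq, supp_connectedComponentMk_deleteIncidenceSet ha]
      exact ((mem_singleton_iff.mp hac) ▸ le_rfl)
  · intro d₁ d₂ hd₁ hd₂ h
    obtain ⟨a₁, ha₁, rfl⟩ := houtside d₁ hd₁
    obtain ⟨a₂, ha₂, rfl⟩ := houtside d₂ hd₂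
    rw [ConnectedComponent.map_mk, ConnectedComponent.map_mk] at h
    apply ConnectedComponent.supp_injective
    rw [supp_connectedComponentMk_deleteIncidenceSet ha₁,
      supp_connectedComponentMk_deleteIncidenceSet ha₂]
    exact congrArg _ h
  · intro e ⟨he, hec⟩
    induction e using ConnectedComponent.ind with | _ a => ?_
    have ha : ¬G.Reachable a v := fun h => hec (ConnectedComponent.eq.mpr h)
    refine ⟨Gv.connectedComponentMk a, ⟨?_, fun hsub => ha ?_⟩,
      ConnectedComponent.map_mk _ _⟩
    · rw [mem_ofPred_eq, supp_connectedComponentMk_deleteIncidenceSet ha]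
      exact he
    · exact ConnectedComponent.eq.mp (hsub (ConnectedComponent.connectedComponentMk_mem))

lemma connectedComponentMk_deleteIncidenceSet_mem_oddComponents (G : SimpleGraph V) (v : V) :
    (G.deleteIncidenceSet v).connectedComponentMk v ∈ (G.deleteIncidenceSet v).oddComponents := by
  simp [oddComponents, (G.isIsolated_deleteIncidenceSet v).supp_connectedComponentMk]

lemma odd_ncard_oddComponents_deleteIncidenceSet_subset_iff [Finite V] (v : V) :
    Odd {d ∈ (G.deleteIncidenceSet v).oddComponents |
        d.supp ⊆ (G.connectedComponentMk v).supp}.ncard ↔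
      Odd (G.connectedComponentMk v).supp.ncard :=
  ConnectedComponent.odd_oddComponents_ncard_subset_supp _ (G.deleteIncidenceSet_le v) _

lemma ncard_oddComponents_add_two_le_of_even [Finite V]
    (hc : Even (G.connectedComponentMk v).supp.ncard) :
    G.oddComponents.ncard + 2 ≤ (G.deleteIncidenceSet v).oddComponents.ncard := by
  have hcodd : G.connectedComponentMk v ∉ G.oddComponents := Nat.not_odd_iff_even.mpr hc
  have heven := mt (odd_ncard_oddComponents_deleteIncidenceSet_subset_iff v).mp
    (Nat.not_odd_iff_even.mpr hc)
  rw [ncard_oddComponents_deleteIncidenceSet, sdiff_singleton_eq_self hcodd]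
  set inside := {d ∈ (G.deleteIncidenceSet v).oddComponents |
    d.supp ⊆ (G.connectedComponentMk v).supp}
  have hpos : 0 < inside.ncard :=
    (ncard_pos (toFinite _)).mpr
      ⟨_, G.connectedComponentMk_deleteIncidenceSet_mem_oddComponents v,
        supp_connectedComponentMk_subset_of_le (G.deleteIncidenceSet_le v) v⟩
  obtain ⟨k, hk⟩ := Nat.not_odd_iff_even.mp heven
  omega

lemma ncard_oddComponents_add_two_le_of_odd [Finite V] (hxu : G.Adj x u)
    (hc : Odd (G.connectedComponentMk u).supp.ncard)
    (hx : Odd ((G.deleteIncidenceSet u).connectedComponentMk x).supp.ncard) :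
    G.oddComponents.ncard + 2 ≤ (G.deleteIncidenceSet u).oddComponents.ncard := by
  have hcount := ncard_sdiff_singleton_add_one
    (show G.connectedComponentMk u ∈ G.oddComponents from hc) (toFinite _)
  have hodd := (odd_ncard_oddComponents_deleteIncidenceSet_subset_iff u).mpr hc
  rw [ncard_oddComponents_deleteIncidenceSet]
  set Gu := G.deleteIncidenceSet u
  set inside := {d ∈ Gu.oddComponents | d.supp ⊆ (G.connectedComponentMk u).supp}
  have hne : Gu.connectedComponentMk u ≠ Gu.connectedComponentMk x := fun h =>
    hxu.ne ((G.isIsolated_deleteIncidenceSet u).eq_of_reachable (ConnectedComponent.eq.mp h)).symm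
  have htwo : 2 ≤ inside.ncard := by
    rw [← ncard_pair hne]
    refine ncard_le_ncard (pair_subset ⟨?_, ?_⟩ ⟨hx, ?_⟩) (toFinite _)
    · exact G.connectedComponentMk_deleteIncidenceSet_mem_oddComponents u
    · exact supp_connectedComponentMk_subset_of_le (G.deleteIncidenceSet_le u) u
    · rw [← ConnectedComponent.eq.mpr hxu.reachable]
      exact supp_connectedComponentMk_subset_of_le (G.deleteIncidenceSet_le u) x
  obtain ⟨k, hk⟩ := hodd
  omega

lemma reachable_deleteIncidenceSet_or_eq_of_adj {a t t' : V} (hav : a ≠ v)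
    (ht : (G.deleteIncidenceSet v).Reachable a t) (htt' : G.Adj t t') :
    (G.deleteIncidenceSet v).Reachable a t' ∨ t' = v := by
  by_cases ht'v : t' = v
  · exact .inr ht'v
  have htv : t ≠ v := by
    rintro rfl
    exact hav ((G.isIsolated_deleteIncidenceSet t).eq_of_reachable ht.symm).symm
  exact .inl (ht.trans (deleteIncidenceSet_adj.mpr ⟨htt', htv, ht'v⟩).reachable)

lemma supp_deleteIncidenceSet_union_eq (hxu : G.Adj x u) :
    ((G.deleteIncidenceSet u).connectedComponentMk x).supp ∪
      ((G.deleteIncidenceSet x).connectedComponentMk u).supp = (G.connectedComponentMk x).supp := by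
  refine subset_antisymm (union_subset ?_ ?_) fun t ht => ?_
  · exact supp_connectedComponentMk_subset_of_le (G.deleteIncidenceSet_le u) x
  · rw [ConnectedComponent.eq.mpr hxu.reachable]
    exact supp_connectedComponentMk_subset_of_le (G.deleteIncidenceSet_le x) u
  simp only [mem_union, ConnectedComponent.mem_supp_iff, ConnectedComponent.eq,
    reachable_comm (u := t)]
  have hxt := (reachable_iff_reflTransGen x t).mp (ConnectedComponent.eq.mp ht).symm
  clear ht
  induction hxt with
  | refl => exact .inl .rfl
  | tail _ hadj ih =>
    rcases ih with h | h
    · rcases reachable_deleteIncidenceSet_or_eq_of_adj hxu.ne h hadj with h' | rfl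
      · exact .inl h'
      · exact .inr .rfl
    · rcases reachable_deleteIncidenceSet_or_eq_of_adj hxu.ne.symm h hadj with h' | rfl
      · exact .inr h'
      · exact .inl .rfl

lemma deleteIncidenceSet_le_deleteEdges {e : Sym2 V} (he : e ∈ G.edgeSet) (hv : v ∈ e) :
    G.deleteIncidenceSet v ≤ G.deleteEdges {e} :=
  deleteEdges_anti (singleton_subset_iff.mpr ⟨he, hv⟩)

lemma disjoint_supp_deleteIncidenceSet (hxu : G.Adj x u)
    (hbr : ¬(G.deleteEdges {s(x, u)}).Reachable x u) :
    Disjoint ((G.deleteIncidenceSet u).connectedComponentMk x).supp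
      ((G.deleteIncidenceSet x).connectedComponentMk u).supp := by
  refine Set.disjoint_left.mpr fun t htx htu => hbr ?_
  have hx := (ConnectedComponent.eq.mp htx).mono
    (deleteIncidenceSet_le_deleteEdges hxu (Sym2.mem_mk_right x u))
  have hu := (ConnectedComponent.eq.mp htu).mono
    (deleteIncidenceSet_le_deleteEdges hxu (Sym2.mem_mk_left x u))
  exact hx.symm.trans hu

theorem exists_ncard_oddComponents_add_two_le_deleteIncidenceSet [Finite V] (hxu : G.Adj x u)
    (hbr : ¬(G.deleteEdges {s(x, u)}).Reachable x u) :
    ∃ v ∈ ({x, u} : Set V),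
      G.oddComponents.ncard + 2 ≤ (G.deleteIncidenceSet v).oddComponents.ncard := by
  rcases Nat.even_or_odd (G.connectedComponentMk x).supp.ncard with hc | hc
  · exact ⟨x, .inl rfl, ncard_oddComponents_add_two_le_of_even hc⟩
  have hsides := ncard_union_eq (disjoint_supp_deleteIncidenceSet hxu hbr) (toFinite _) (toFinite _)
  rw [supp_deleteIncidenceSet_union_eq hxu] at hsides
  have hcu : G.connectedComponentMk u = G.connectedComponentMk x :=
    ConnectedComponent.eq.mpr hxu.reachable.symm
  rw [hsides] at hc
  rcases Nat.even_or_odd ((G.deleteIncidenceSet u).connectedComponentMk x).supp.ncard with hx | hx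
  · refine ⟨x, .inl rfl, ncard_oddComponents_add_two_le_of_odd hxu.symm ?_ ?_⟩
    · rw [hsides]; exact hc
    · exact (Nat.odd_add'.mp hc).mpr hx
  · refine ⟨u, .inr rfl, ncard_oddComponents_add_two_le_of_odd hxu ?_ hx⟩
    rw [hcu, hsides]; exact hc

end DeleteIncidenceSet

def deleteIncidenceSets (G : SimpleGraph V) (S : Set V) : SimpleGraph V where
  Adj a b := G.Adj a b ∧ a ∉ S ∧ b ∉ S
  symm.symm _ _ h := ⟨h.1.symm, h.2.2, h.2.1⟩
  loopless.irrefl _ h := G.irrefl h.1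

section DeleteIncidenceSets

variable {S : Set V}

@[simp]
lemma deleteIncidenceSets_adj {a b : V} :
    (G.deleteIncidenceSets S).Adj a b ↔ G.Adj a b ∧ a ∉ S ∧ b ∉ S :=
  Iff.rfl

lemma deleteIncidenceSets_le (G : SimpleGraph V) (S : Set V) : G.deleteIncidenceSets S ≤ G :=
  fun _ _ h => h.1

lemma support_deleteIncidenceSets :
    (G.deleteIncidenceSets S).support = {v | v ∉ S ∧ ∃ u, u ∉ S ∧ G.Adj v u} := by
  ext v
  simp only [mem_support, deleteIncidenceSets_adj, mem_ofPred_eq]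
  tauto

lemma deleteIncidenceSets_insert (v : V) :
    G.deleteIncidenceSets (insert v S) = (G.deleteIncidenceSets S).deleteIncidenceSet v := by
  ext a b
  simp only [deleteIncidenceSet_adj, deleteIncidenceSets_adj, mem_insert_iff, not_or]
  tauto

lemma ncard_oddComponents_deleteIncidenceSets [Fintype V] (G : SimpleGraph V) (S : Set V) :
    (G.deleteIncidenceSets S).oddComponents.ncard = oddComps G S + S.ncard := by
  rw [ncard_oddComponents_eq_of_isIsolated (G := G.deleteIncidenceSets S) (s := S)
    fun v hv _ h => h.2.1 hv]
  have hinduce : (G.deleteIncidenceSets S).induce Sᶜ = G.induce Sᶜ := by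
    ext a b
    exact ⟨fun h => h.1, fun h => ⟨h, a.2, b.2⟩⟩
  rw [hinduce]
  rfl

end DeleteIncidenceSets

lemma Walk.IsCycle.exists_isCycle_induce_support {G H : SimpleGraph V} (hle : G ≤ H) {x : V}
    {p : G.Walk x x} (hp : p.IsCycle) :
    ∃ (hx : x ∈ G.support) (q : (H.induce G.support).Walk ⟨x, hx⟩ ⟨x, hx⟩),
      q.IsCycle := by
  have hsupp : ∀ z ∈ (p.mapLe hle).support, z ∈ G.support := fun z hz =>
    mem_support_of_mem_walk_support p hp.not_nil (by rwa [Walk.support_mapLe_eq_support] at hz)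
  refine ⟨hsupp x (p.mapLe hle).start_mem_support, (p.mapLe hle).induce _ hsupp, ?_⟩
  rw [← Walk.isCycle_map_iff_of_injective (f := (Embedding.induce G.support).toHom)
    Subtype.val_injective, Walk.map_induce]
  exact (Walk.isCycle_mapLe hle).mpr hp

end SimpleGraph

theorem tutteBerge_extremal_no_tree_components
    {V : Type*} [Fintype V] (G M : SimpleGraph V) (S : Set V)
    (hmin : ∀ U : Set V,
      (S.ncard : ℤ) - (oddComps (G \ M) S : ℤ) ≤ (U.ncard : ℤ) - (oddComps (G \ M) U : ℤ))
    (hmax : ∀ U : Set V,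
      (U.ncard : ℤ) - (oddComps (G \ M) U : ℤ) =
        (S.ncard : ℤ) - (oddComps (G \ M) S : ℤ) → U.ncard ≤ S.ncard) :
    ∀ C : ((G \ M).induce
        {v : V | v ∉ S ∧ ∃ u, u ∉ S ∧ (G \ M).Adj v u}).ConnectedComponent,
      ∃ (x : {v : V // v ∈ {v : V | v ∉ S ∧ ∃ u, u ∉ S ∧ (G \ M).Adj v u}})
        (w : ((G \ M).induce {v : V | v ∉ S ∧ ∃ u, u ∉ S ∧ (G \ M).Adj v u}).Walk x x),
        w.IsCycle ∧
        ((G \ M).induce {v : V | v ∉ S ∧ ∃ u, u ∉ S ∧ (G \ M).Adj v u}).connectedComponentMk x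
          = C := by
  classical
  set L := (G \ M).deleteIncidenceSets S
  rw [← support_deleteIncidenceSets]
  rintro ⟨x, hx⟩
  obtain ⟨u, hxu⟩ := (mem_support L).mp hx
  by_cases hbr : (L.deleteEdges {s(x, u)}).Reachable x u
  · obtain ⟨y, p, hp, he⟩ := adj_and_reachable_delete_edges_iff_exists_cycle.mp ⟨hxu, hbr⟩
    have hxp : x ∈ p.support := p.fst_mem_support_of_mem_edges he
    obtain ⟨hx', q, hq⟩ :=
      (hp.rotate hxp).exists_isCycle_induce_support (deleteIncidenceSets_le _ S)
    exact ⟨⟨x, hx'⟩, q, hq, rfl⟩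
  obtain ⟨v, hv, hgain⟩ := exists_ncard_oddComponents_add_two_le_deleteIncidenceSet hxu hbr
  have hvS : v ∉ S := by
    rcases hv with rfl | rfl
    · exact (support_deleteIncidenceSets ▸ hx).1
    · exact (support_deleteIncidenceSets ▸ hxu.mem_support_right).1
  rw [← deleteIncidenceSets_insert, ncard_oddComponents_deleteIncidenceSets,
    ncard_oddComponents_deleteIncidenceSets] at hgain
  have hcard := ncard_insert_of_notMem hvS (toFinite S)
  have := hmax (insert v S) (le_antisymm (by omega) (hmin _))
  omega
end

section
/- Fix c ≥ 20 and p = c/n. With high probability as n → ∞, the random graph G(n, c/n) contains no pair of disjoint vertex sets S, T with |S| = |T| ≤ n/(1.25 c³) and |S| ≥ 3 such that every vertex of S has at least 3 neighbors in T. -/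
/-!
First-moment argument. For fixed disjoint `S`, `T` with `|S| = |T| = s`, the event that every
vertex of `S` has three neighbours in `T` forces one of at most `C(s,3)^s` sets of `3s` edges,
so it has probability at most `C(s,3)^s p^(3s)`. Summing over the `C(n,s)^2` pairs, the
contribution of size `s` is at most `(e² c³ s / (6n))^s`, and for `s ≤ n / (1.25 c³)` the base
is at most `r = e² / 7.5 < 1`. Hence the expected number of bad pairs is
`≤ (e² c³ / 6n) ∑ s r^(s-1) = O(1/n)`.
-/

open SimpleGraph Set Filter
open scoped Classical

/-- The weight of a given graph on `[n]` under the Erdős–Rényi measure `G(n,p)`. -/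
noncomputable def erWeight (n : ℕ) (p : ℝ) (G : SimpleGraph (Fin n)) : ℝ :=
  p ^ G.edgeSet.ncard * (1 - p) ^ (n.choose 2 - G.edgeSet.ncard)

/-- The probability that `G(n,p)` satisfies the property `A`. -/
noncomputable def erProb (n : ℕ) (p : ℝ) (A : SimpleGraph (Fin n) → Prop) : ℝ :=
  ∑ G : SimpleGraph (Fin n), if A G then erWeight n p G else 0

namespace Finset

variable {α : Type*} [DecidableEq α]

theorem sum_powerset_superset_binomial_weight {U E : Finset α} (hEU : E ⊆ U) (p : ℝ) :
    ∑ A ∈ U.powerset, (if E ⊆ A then p ^ #A * (1 - p) ^ (#U - #A) else 0) = p ^ #E := by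
  calc ∑ A ∈ U.powerset, (if E ⊆ A then p ^ #A * (1 - p) ^ (#U - #A) else 0)
      = ∑ A ∈ U.powerset, (∏ _e ∈ A, p) * ∏ e ∈ U \ A, (if e ∈ E then 0 else 1 - p) := by
        refine sum_congr rfl fun A hA => ?_
        rw [mem_powerset] at hA
        split_ifs with hEA
        · rw [prod_const, ← card_sdiff_of_subset hA, prod_congr rfl fun e he => if_neg
            fun heE => (mem_sdiff.1 he).2 (hEA heE), prod_const]
        · obtain ⟨e, heE, heA⟩ := not_subset.1 hEA
          rw [prod_eq_zero (mem_sdiff.2 ⟨hEU heE, heA⟩) (by rw [if_pos heE]), mul_zero]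
    _ = ∏ e ∈ U, (p + if e ∈ E then 0 else 1 - p) := (prod_add _ _ _).symm
    _ = ∏ e ∈ U, if e ∈ E then p else 1 := prod_congr rfl fun e _ => by split_ifs <;> ring
    _ = p ^ #E := by rw [prod_ite_mem, inter_eq_right.2 hEU, prod_const]

end Finset

namespace SimpleGraph

variable {V : Type*} [Fintype V] [DecidableEq V]

theorem sum_edgeFinset_eq_sum_powerset (F : Finset (Sym2 V) → ℝ) :
    ∑ G : SimpleGraph V, F G.edgeFinset = ∑ A ∈ (⊤ : SimpleGraph V).edgeFinset.powerset, F A := by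
  refine Finset.sum_nbij' (fun G => G.edgeFinset) (fun A => fromEdgeSet A)
    (fun G _ => Finset.mem_powerset.2 (edgeFinset_mono le_top)) (fun _ _ => Finset.mem_univ _)
    (fun G _ => by simp) (fun A hA => ?_) (fun _ _ => rfl)
  have hA : ∀ e ∈ A, ¬ e.IsDiag := fun e he => by
    simpa using Finset.mem_powerset.1 hA he
  ext e
  simpa using fun he => hA e he

end SimpleGraph

section ErdosRenyi

variable {n : ℕ} {p : ℝ}

theorem erProb_edgeFinset_superset {E : Finset (Sym2 (Fin n))}
    (hE : E ⊆ (⊤ : SimpleGraph (Fin n)).edgeFinset) :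
    erProb n p (fun G => E ⊆ G.edgeFinset) = p ^ E.card := by
  have hN : (⊤ : SimpleGraph (Fin n)).edgeFinset.card = n.choose 2 := by
    rw [SimpleGraph.card_edgeFinset_top_eq_card_choose_two, Fintype.card_fin]
  rw [← Finset.sum_powerset_superset_binomial_weight hE p, hN,
    ← SimpleGraph.sum_edgeFinset_eq_sum_powerset, erProb]
  refine Finset.sum_congr rfl fun G _ => ?_
  rw [erWeight, ← SimpleGraph.coe_edgeFinset, Set.ncard_coe_finset]
  congr

theorem erProb_not (A : SimpleGraph (Fin n) → Prop) :
    erProb n p (fun G => ¬ A G) = 1 - erProb n p A := by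
  have htotal : erProb n p (fun _ => True) = 1 := by
    simpa using erProb_edgeFinset_superset (p := p) (Finset.empty_subset _)
  rw [← htotal, erProb, erProb, erProb, eq_sub_iff_add_eq, ← Finset.sum_add_distrib]
  exact Finset.sum_congr rfl fun G _ => by by_cases hA : A G <;> simp [hA]

theorem erWeight_nonneg (hp₀ : 0 ≤ p) (hp₁ : p ≤ 1) (G : SimpleGraph (Fin n)) :
    0 ≤ erWeight n p G :=
  mul_nonneg (pow_nonneg hp₀ _) (pow_nonneg (sub_nonneg.2 hp₁) _)

theorem erProb_nonneg (hp₀ : 0 ≤ p) (hp₁ : p ≤ 1) (A : SimpleGraph (Fin n) → Prop) :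
    0 ≤ erProb n p A :=
  Finset.sum_nonneg fun G _ => ite_nonneg (erWeight_nonneg hp₀ hp₁ G) le_rfl

theorem erProb_mono (hp₀ : 0 ≤ p) (hp₁ : p ≤ 1) {A B : SimpleGraph (Fin n) → Prop}
    (h : ∀ G, A G → B G) :
    erProb n p A ≤ erProb n p B := by
  refine Finset.sum_le_sum fun G _ => ?_
  by_cases hA : A G
  · rw [if_pos hA, if_pos (h G hA)]
  · rw [if_neg hA]
    exact ite_nonneg (erWeight_nonneg hp₀ hp₁ G) le_rfl

theorem erProb_exists_le_sum (hp₀ : 0 ≤ p) (hp₁ : p ≤ 1) {ι : Type*} (I : Finset ι)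
    (A : ι → SimpleGraph (Fin n) → Prop) :
    erProb n p (fun G => ∃ i ∈ I, A i G) ≤ ∑ i ∈ I, erProb n p (A i) := by
  unfold erProb
  rw [Finset.sum_comm]
  refine Finset.sum_le_sum fun G _ => ?_
  have hterm : ∀ i ∈ I, 0 ≤ if A i G then erWeight n p G else 0 :=
    fun i _ => ite_nonneg (erWeight_nonneg hp₀ hp₁ G) le_rfl
  split_ifs with hex
  · obtain ⟨i, hi, hAi⟩ := hex
    simpa [hAi] using Finset.single_le_sum hterm hi
  · exact Finset.sum_nonneg hterm

end ErdosRenyi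

section Fans

variable {V : Type*} [DecidableEq V] {S T : Finset V}

def fanEdges (f : S → Finset V) : Finset (Sym2 V) :=
  (Finset.univ.sigma f).image fun x => s(x.1.1, x.2)

theorem mem_fanEdges {f : S → Finset V} {e : Sym2 V} :
    e ∈ fanEdges f ↔ ∃ v : S, ∃ u ∈ f v, s(v.1, u) = e := by
  simp [fanEdges]

theorem card_fanEdges (hST : Disjoint S T) {f : S → Finset V} (hf : ∀ v, f v ⊆ T) :
    (fanEdges f).card = ∑ v, (f v).card := by
  rw [fanEdges, Finset.card_image_of_injOn, Finset.card_sigma]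
  rintro ⟨v, u⟩ - ⟨w, u'⟩ hu' h
  rw [Finset.mem_coe, Finset.mem_sigma] at hu'
  rcases Sym2.eq_iff.1 h with ⟨hvw, huu'⟩ | ⟨hvu', -⟩
  · obtain rfl := Subtype.ext hvw
    obtain rfl : u = u' := huu'
    rfl
  · exact absurd (hvu' ▸ hf w hu'.2) (Finset.disjoint_left.1 hST v.2)

end Fans

theorem erProb_forall_le_card_filter_adj_le {n : ℕ} {p : ℝ} (hp₀ : 0 ≤ p) (hp₁ : p ≤ 1)
    {S T : Finset (Fin n)} (hST : Disjoint S T) (k : ℕ) :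
    erProb n p (fun G => ∀ v ∈ S, k ≤ (T.filter (fun u => G.Adj v u)).card)
      ≤ (T.card.choose k : ℝ) ^ S.card * p ^ (k * S.card) := by
  set choices := Fintype.piFinset fun _ : S => T.powersetCard k
  have hchoice : ∀ f ∈ choices, ∀ v, f v ⊆ T ∧ (f v).card = k := fun f hf v =>
    Finset.mem_powersetCard.1 (Fintype.mem_piFinset.1 hf v)
  have hfan_top : ∀ f ∈ choices, fanEdges f ⊆ (⊤ : SimpleGraph (Fin n)).edgeFinset := by
    intro f hf e he
    obtain ⟨v, u, hu, rfl⟩ := mem_fanEdges.1 he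
    have hu : u ∉ S := Finset.disjoint_right.1 hST ((hchoice f hf v).1 hu)
    simpa using fun hvu : v.1 = u => hu (hvu ▸ v.2)
  have hfan_card : ∀ f ∈ choices, (fanEdges f).card = k * S.card := fun f hf => by
    simp [card_fanEdges hST fun v => (hchoice f hf v).1, (hchoice f hf _).2, mul_comm]
  have hcover : ∀ G : SimpleGraph (Fin n), (∀ v ∈ S, k ≤ (T.filter (fun u => G.Adj v u)).card) →
      ∃ f ∈ choices, fanEdges f ⊆ G.edgeFinset := by
    intro G hG
    choose f hfT hfk using fun v : S => Finset.exists_subset_card_eq (hG v v.2)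
    refine ⟨f, Fintype.mem_piFinset.2 fun v => Finset.mem_powersetCard.2
      ⟨(hfT v).trans (Finset.filter_subset _ _), hfk v⟩, fun e he => ?_⟩
    obtain ⟨v, u, hu, rfl⟩ := mem_fanEdges.1 he
    simpa using (Finset.mem_filter.1 (hfT v hu)).2
  calc erProb n p (fun G => ∀ v ∈ S, k ≤ (T.filter (fun u => G.Adj v u)).card)
      ≤ erProb n p (fun G => ∃ f ∈ choices, fanEdges f ⊆ G.edgeFinset) :=
        erProb_mono hp₀ hp₁ hcover
    _ ≤ ∑ f ∈ choices, erProb n p (fun G => fanEdges f ⊆ G.edgeFinset) :=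
        erProb_exists_le_sum hp₀ hp₁ _ _
    _ = ∑ _f ∈ choices, p ^ (k * S.card) := Finset.sum_congr rfl fun f hf => by
        rw [erProb_edgeFinset_superset (hfan_top f hf), hfan_card f hf]
    _ = (T.card.choose k : ℝ) ^ S.card * p ^ (k * S.card) := by
        simp [choices, Finset.card_powersetCard]

theorem erProb_exists_pair_le_sum {n : ℕ} {p : ℝ} (hp₀ : 0 ≤ p) (hp₁ : p ≤ 1) (k a : ℕ) (x : ℝ) :
    erProb n p (fun G => ∃ S T : Finset (Fin n), Disjoint S T ∧ S.card = T.card ∧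
        (S.card : ℝ) ≤ x ∧ a ≤ S.card ∧ ∀ v ∈ S, k ≤ (T.filter (fun u => G.Adj v u)).card)
      ≤ ∑ s ∈ Finset.Icc a ⌊x⌋₊, (n.choose s : ℝ) ^ 2 * (s.choose k : ℝ) ^ s * p ^ (k * s) := by
  set sets : ℕ → Finset (Finset (Fin n)) := fun s => Finset.univ.powersetCard s
  set pairEvent : Finset (Fin n) → Finset (Fin n) → SimpleGraph (Fin n) → Prop :=
    fun S T G => Disjoint S T ∧ ∀ v ∈ S, k ≤ (T.filter (fun u => G.Adj v u)).card
  have hpair : ∀ s, ∀ S ∈ sets s, ∀ T ∈ sets s,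
      erProb n p (pairEvent S T) ≤ (s.choose k : ℝ) ^ s * p ^ (k * s) := by
    intro s S hS T hT
    obtain ⟨-, rfl⟩ := Finset.mem_powersetCard.1 hS
    obtain ⟨-, hTS⟩ := Finset.mem_powersetCard.1 hT
    by_cases hST : Disjoint S T
    · have h := erProb_forall_le_card_filter_adj_le hp₀ hp₁ hST k
      rw [hTS] at h
      exact (erProb_mono hp₀ hp₁ fun G hG => hG.2).trans h
    · simpa [erProb, pairEvent, hST] using by positivity
  calc _ ≤ erProb n p (fun G => ∃ s ∈ Finset.Icc a ⌊x⌋₊, ∃ S ∈ sets s, ∃ T ∈ sets s,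
          pairEvent S T G) := by
        refine erProb_mono hp₀ hp₁ fun G ⟨S, T, hST, hcard, hx, ha, hG⟩ => ?_
        exact ⟨S.card, Finset.mem_Icc.2 ⟨ha, Nat.le_floor hx⟩, S, by simp [sets],
          T, by simp [sets, hcard], hST, hG⟩
    _ ≤ ∑ s ∈ Finset.Icc a ⌊x⌋₊, ∑ S ∈ sets s, ∑ T ∈ sets s, erProb n p (pairEvent S T) := by
        refine (erProb_exists_le_sum hp₀ hp₁ _ _).trans (Finset.sum_le_sum fun s _ => ?_)
        refine (erProb_exists_le_sum hp₀ hp₁ _ _).trans (Finset.sum_le_sum fun S _ => ?_)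
        exact erProb_exists_le_sum hp₀ hp₁ _ _
    _ ≤ ∑ s ∈ Finset.Icc a ⌊x⌋₊, ∑ S ∈ sets s, ∑ T ∈ sets s, (s.choose k : ℝ) ^ s * p ^ (k * s) :=
        Finset.sum_le_sum fun s _ => Finset.sum_le_sum fun S hS =>
          Finset.sum_le_sum fun T hT => hpair s S hS T hT
    _ = _ := by simp [sets, Finset.card_powersetCard, mul_assoc, sq]

theorem Nat.choose_le_exp_mul_div_pow (n s : ℕ) :
    (n.choose s : ℝ) ≤ (Real.exp 1 * n / s) ^ s := by
  rcases s.eq_zero_or_pos with rfl | hs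
  · simp
  have hs' : (s : ℝ) ≠ 0 := by positivity
  calc (n.choose s : ℝ) ≤ (n : ℝ) ^ s / s.factorial := Nat.choose_le_pow_div s n
    _ = (n / s : ℝ) ^ s * ((s : ℝ) ^ s / s.factorial) := by rw [div_pow]; field_simp
    _ ≤ (n / s : ℝ) ^ s * Real.exp s := by
        gcongr
        exact Real.pow_div_factorial_le_exp _ s.cast_nonneg s
    _ = (Real.exp 1 * n / s) ^ s := by rw [← Real.exp_one_pow]; ring

theorem choose_sq_mul_choose_three_pow_le {n : ℕ} (hn : n ≠ 0) (s : ℕ) {c : ℝ} (hc : 0 ≤ c) :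
    (n.choose s : ℝ) ^ 2 * (s.choose 3 : ℝ) ^ s * (c / n) ^ (3 * s)
      ≤ (Real.exp 1 ^ 2 * c ^ 3 / (6 * n) * s) ^ s := by
  rcases s.eq_zero_or_pos with rfl | hs
  · simp
  have hthree : (s.choose 3 : ℝ) ≤ (s : ℝ) ^ 3 / 6 := by
    simpa [Nat.factorial] using Nat.choose_le_pow_div (α := ℝ) 3 s
  calc (n.choose s : ℝ) ^ 2 * (s.choose 3 : ℝ) ^ s * (c / n) ^ (3 * s)
      ≤ ((Real.exp 1 * n / s) ^ s) ^ 2 * ((s : ℝ) ^ 3 / 6) ^ s * ((c / n) ^ 3) ^ s := by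
        rw [pow_mul]
        gcongr
        exact Nat.choose_le_exp_mul_div_pow n s
    _ = ((Real.exp 1 * n / s) ^ 2 * ((s : ℝ) ^ 3 / 6) * (c / n) ^ 3) ^ s := by ring
    _ = (Real.exp 1 ^ 2 * c ^ 3 / (6 * n) * s) ^ s := by
        congr 1
        field_simp

theorem sum_mul_pow_self_le {γ r : ℝ} (hγ : 0 ≤ γ) (hr₀ : 0 < r) (hr₁ : r < 1) {F : Finset ℕ}
    (hF : ∀ s ∈ F, 1 ≤ s ∧ γ * s ≤ r) :
    ∑ s ∈ F, (γ * s) ^ s ≤ γ / (1 - r) ^ 2 := by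
  have hterm : ∀ s ∈ F, r * (γ * s) ^ s ≤ γ * (s * r ^ s) := by
    intro s hs
    obtain ⟨m, rfl⟩ := Nat.exists_eq_add_of_le' (hF s hs).1
    have hx : 0 ≤ γ * (m + 1 : ℕ) := by positivity
    have hm : (γ * (m + 1 : ℕ)) ^ m ≤ r ^ m := pow_le_pow_left₀ hx (hF _ hs).2 m
    calc r * (γ * (m + 1 : ℕ)) ^ (m + 1) = r * (γ * (m + 1 : ℕ)) ^ m * (γ * (m + 1 : ℕ)) := by
          ring
      _ ≤ r * r ^ m * (γ * (m + 1 : ℕ)) := by gcongr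
      _ = γ * ((m + 1 : ℕ) * r ^ (m + 1)) := by ring
  have hgeom : ∑ s ∈ F, (s : ℝ) * r ^ s ≤ r / (1 - r) ^ 2 :=
    sum_le_hasSum F (fun s _ => by positivity)
      (hasSum_coe_mul_geometric_of_norm_lt_one (by rwa [Real.norm_of_nonneg hr₀.le]))
  rw [← mul_le_mul_iff_of_pos_left hr₀, Finset.mul_sum]
  calc ∑ s ∈ F, r * (γ * s) ^ s ≤ ∑ s ∈ F, γ * (s * r ^ s) := Finset.sum_le_sum hterm
    _ = γ * ∑ s ∈ F, (s : ℝ) * r ^ s := (Finset.mul_sum _ _ _).symm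
    _ ≤ γ * (r / (1 - r) ^ 2) := by gcongr
    _ = r * (γ / (1 - r) ^ 2) := by ring

theorem erProb_exists_small_pair_three_neighbors_le {c : ℝ} (hc : 0 < c) {n : ℕ}
    (hcn : c ≤ n) :
    erProb n (c / n) (fun G =>
      ∃ S T : Finset (Fin n), Disjoint S T ∧ S.card = T.card ∧
        (S.card : ℝ) ≤ (n : ℝ) / (1.25 * c ^ 3) ∧ 3 ≤ S.card ∧
        ∀ v ∈ S, 3 ≤ (T.filter (fun u => G.Adj v u)).card)
      ≤ Real.exp 1 ^ 2 * c ^ 3 / (6 * (1 - Real.exp 1 ^ 2 / 7.5) ^ 2) / n := by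
  have hn : (0 : ℝ) < n := hc.trans_le hcn
  set γ : ℝ := Real.exp 1 ^ 2 * c ^ 3 / (6 * n)
  set r : ℝ := Real.exp 1 ^ 2 / 7.5
  have hr₁ : r < 1 := by
    have := Real.exp_one_lt_d9
    rw [div_lt_one (by norm_num)]
    nlinarith [Real.exp_pos 1]
  -- the size threshold `n / (1.25 c³)` is exactly the one making `γ s ≤ r` for admissible `s`
  have hγr : γ * (n / (1.25 * c ^ 3)) = r := by
    simp only [γ, r]
    field_simp
    norm_num
  have hsmall : ∀ s ∈ Finset.Icc 3 ⌊(n : ℝ) / (1.25 * c ^ 3)⌋₊, 1 ≤ s ∧ γ * s ≤ r := by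
    intro s hs
    obtain ⟨h3s, hs⟩ := Finset.mem_Icc.1 hs
    refine ⟨by omega, hγr ▸ ?_⟩
    gcongr
    exact (Nat.le_floor_iff (by positivity)).1 hs
  calc _ ≤ ∑ s ∈ Finset.Icc 3 ⌊(n : ℝ) / (1.25 * c ^ 3)⌋₊,
          (n.choose s : ℝ) ^ 2 * (s.choose 3 : ℝ) ^ s * (c / n) ^ (3 * s) :=
        erProb_exists_pair_le_sum (by positivity) ((div_le_one hn).2 hcn) 3 3 _
    _ ≤ ∑ s ∈ Finset.Icc 3 ⌊(n : ℝ) / (1.25 * c ^ 3)⌋₊, (γ * s) ^ s :=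
        Finset.sum_le_sum fun s _ =>
          choose_sq_mul_choose_three_pow_le (Nat.cast_pos.1 hn).ne' s hc.le
    _ ≤ γ / (1 - r) ^ 2 := sum_mul_pow_self_le (by positivity) (by positivity) hr₁ hsmall
    _ = _ := by simp only [γ, div_div]; ring

theorem whp_no_small_set_with_three_neighbors (c : ℝ) (hc : 20 ≤ c) :
    Tendsto (fun n : ℕ => erProb n (c / n) (fun G =>
      ¬ ∃ S T : Finset (Fin n), Disjoint S T ∧ S.card = T.card ∧
        (S.card : ℝ) ≤ (n : ℝ) / (1.25 * c ^ 3) ∧ 3 ≤ S.card ∧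
        ∀ v ∈ S, 3 ≤ (T.filter (fun u => G.Adj v u)).card))
      atTop (nhds 1) := by
  have hc₀ : 0 < c := by linarith
  have hlarge : ∀ᶠ n : ℕ in atTop, c ≤ n := by
    filter_upwards [eventually_ge_atTop ⌈c⌉₊] with n hn using Nat.ceil_le.1 hn
  have hbad : Tendsto (fun n : ℕ => erProb n (c / n) (fun G =>
      ∃ S T : Finset (Fin n), Disjoint S T ∧ S.card = T.card ∧
        (S.card : ℝ) ≤ (n : ℝ) / (1.25 * c ^ 3) ∧ 3 ≤ S.card ∧
        ∀ v ∈ S, 3 ≤ (T.filter (fun u => G.Adj v u)).card)) atTop (nhds 0) := by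
    refine squeeze_zero' ?_ ?_ (tendsto_const_div_atTop_nhds_zero_nat
      (Real.exp 1 ^ 2 * c ^ 3 / (6 * (1 - Real.exp 1 ^ 2 / 7.5) ^ 2)))
    · filter_upwards [hlarge] with n hn
      have hn₀ : (0 : ℝ) < n := hc₀.trans_le hn
      exact erProb_nonneg (by positivity) ((div_le_one hn₀).2 hn) _
    · filter_upwards [hlarge] with n hn
      exact erProb_exists_small_pair_three_neighbors_le hc₀ hn
  simpa only [erProb_not, sub_zero] using (tendsto_const_nhds (x := (1 : ℝ))).sub hbad
end
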